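/- arXiv:2506.18833 — 4 statements merged into one kernel-verified Lean document; each statement's English description precedes it below -/
import Mathlib

section
/- Let Δ' = (P \ Id) ∪ Δ, where P is a reflexive and transitive relation on a set C containing Δ, and Id is the identity relation. Then the transitive closure of Δ' equals Δ' ∪ (P \ Id)², where (P \ Id)² denotes the composition (P \ Id) ∘ (P \ Id). -/
/-- The transitive closure of Δ' = (P \ Id) ∪ Δ equals Δ' ∪ (P \ Id)². -/
theorem stmt1 {C : Type*} (P Δ : Set (C × C))
    (hrefl : ∀ c : C, (c, c) ∈ P)
    (htrans : ∀ a b c : C, (a, b) ∈ P → (b, c) ∈ P → (a, c) ∈ P)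
    (hsub : Δ ⊆ P) :
    ∀ a b : C,
      Relation.TransGen (fun x y => ((x, y) ∈ P ∧ x ≠ y) ∨ (x, y) ∈ Δ) a b ↔
        ((((a, b) ∈ P ∧ a ≠ b) ∨ (a, b) ∈ Δ) ∨
          ∃ y, ((a, y) ∈ P ∧ a ≠ y) ∧ ((y, b) ∈ P ∧ y ≠ b)) := by
  intro a b
  constructor
  · intro h
    induction h with
    | single h => exact Or.inl h
    | tail _ hbc ih =>
      rename_i b c _
      -- step b → c: either b = c or (b,c) ∈ P ∧ b ≠ c
      rcases hbc with hbc | hbc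
      · -- (b,c) ∈ P ∧ b ≠ c
        rcases ih with (⟨hab, hne⟩ | hab) | ⟨y, ⟨hay, hne⟩, ⟨hyb, hne'⟩⟩
        · exact Or.inr ⟨b, ⟨hab, hne⟩, hbc⟩
        · by_cases hab' : a = b
          · subst hab'; exact Or.inl (Or.inl hbc)
          · exact Or.inr ⟨b, ⟨hsub hab, hab'⟩, hbc⟩
        · by_cases hyc : y = c
          · subst hyc; exact Or.inl (Or.inl ⟨hay, hne⟩)
          · exact Or.inr ⟨y, ⟨hay, hne⟩, htrans y b c hyb hbc.1, hyc⟩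
      · -- (b,c) ∈ Δ
        by_cases hbc' : b = c
        · subst hbc'; exact ih
        · rcases ih with (⟨hab, hne⟩ | hab) | ⟨y, ⟨hay, hne⟩, ⟨hyb, hne'⟩⟩
          · exact Or.inr ⟨b, ⟨hab, hne⟩, hsub hbc, hbc'⟩
          · by_cases hab' : a = b
            · subst hab'; exact Or.inl (Or.inr hbc)
            · exact Or.inr ⟨b, ⟨hsub hab, hab'⟩, hsub hbc, hbc'⟩
          · by_cases hyc : y = c
            · subst hyc; exact Or.inl (Or.inl ⟨hay, hne⟩)
            · exact Or.inr ⟨y, ⟨hay, hne⟩, htrans y b c hyb (hsub hbc), hyc⟩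
  · rintro (h | ⟨y, hy1, hy2⟩)
    · exact Relation.TransGen.single h
    · exact Relation.TransGen.tail (Relation.TransGen.single (Or.inl hy1)) (Or.inl hy2)
end

section
/- In a finite Markov chain (with every state having at least one successor and all transition probabilities positive), the runs starting from state c₀ that eventually reach a bottom strongly connected component have probability 1. -/
open MeasureTheory Finset Relation
open scoped ENNReal

/-! Let `S` be the set of states outside every bottom strongly connected component. In a finite
graph every state reaches a bottom component, so from every state the chain leaves `S` within a
bounded number `N` of steps with positive probability. Hence the probability of staying in `S`
for `N * k` steps is at most `q ^ k` for some `q < 1`. A run that never reaches a bottom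
component stays in `S` forever, so these runs form a null set. -/

section BottomSCC

variable {C : Type*}

def InBottomSCC (R : C → C → Prop) (c : C) : Prop :=
  ∀ d, ReflTransGen R c d → ReflTransGen R d c

lemma exists_reflTransGen_inBottomSCC [Finite C] (R : C → C → Prop) (c : C) :
    ∃ d, ReflTransGen R c d ∧ InBottomSCC R d := by
  let below : C → C → Prop := fun d e => ReflTransGen R e d ∧ ¬ReflTransGen R d e
  have : IsTrans C below :=
    ⟨fun _ _ _ hab hbc => ⟨hbc.1.trans hab.1, fun h => hbc.2 (hab.1.trans h)⟩⟩
  have : Std.Irrefl below := ⟨fun _ h => h.2 .refl⟩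
  obtain ⟨d, hcd, hmin⟩ :=
    (Finite.wellFounded_of_trans_of_irrefl below).has_min {d | ReflTransGen R c d} ⟨c, .refl⟩
  exact ⟨d, hcd, fun e hde => by_contra fun hed => hmin e (hcd.trans hde) ⟨hde, hed⟩⟩

end BottomSCC

section WeightedSum

variable {ι : Type*} [Fintype ι] {p x : ι → ℝ≥0∞}

lemma sum_mul_le_one (hp : ∑ i, p i = 1) (hx : ∀ i, x i ≤ 1) : ∑ i, p i * x i ≤ 1 :=
  calc ∑ i, p i * x i ≤ ∑ i, p i * 1 := by gcongr; exact hx _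
    _ = 1 := by simp [hp]

lemma sum_mul_lt_one [DecidableEq ι] (hp : ∑ i, p i = 1) (hx : ∀ i, x i ≤ 1) {j : ι}
    (hpj : 0 < p j) (hxj : x j < 1) : ∑ i, p i * x i < 1 := by
  have hpj_ne_top : p j ≠ ⊤ :=
    ne_top_of_le_ne_top ENNReal.one_ne_top (hp ▸ single_le_sum (by simp) (mem_univ j))
  have hrest_ne_top : ∑ i ∈ univ.erase j, p i * x i ≠ ⊤ :=
    ne_top_of_le_ne_top ENNReal.one_ne_top
      ((sum_le_sum_of_subset (erase_subset j univ)).trans (sum_mul_le_one hp hx))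
  calc ∑ i, p i * x i = p j * x j + ∑ i ∈ univ.erase j, p i * x i :=
        (add_sum_erase _ _ (mem_univ j)).symm
    _ < p j * 1 + ∑ i ∈ univ.erase j, p i * 1 := by
        refine ENNReal.add_lt_add_of_lt_of_le hrest_ne_top (by gcongr) ?_
        gcongr; exact hx _
    _ = 1 := by rw [add_sum_erase _ (fun i => p i * 1) (mem_univ j)]; simp [hp]

end WeightedSum

section StayProb

variable {C : Type*} [Fintype C] (pr : C → C → ℝ≥0∞) (S : Set C)

/-- The probability that the chain started at `c` is in `S` at each of the times `0, …, n`. -/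
noncomputable def stayProb : ℕ → C → ℝ≥0∞
  | 0 => S.indicator 1
  | n + 1 => S.indicator fun c => ∑ c', pr c c' * stayProb n c'

variable {pr S}

lemma stayProb_zero : stayProb pr S 0 = S.indicator 1 := rfl

lemma stayProb_succ (n : ℕ) :
    stayProb pr S (n + 1) = S.indicator fun c => ∑ c', pr c c' * stayProb pr S n c' := rfl

lemma stayProb_of_notMem {c : C} (hc : c ∉ S) (n : ℕ) : stayProb pr S n c = 0 := by
  cases n <;> exact Set.indicator_of_notMem hc _

lemma stayProb_zero_le_one (c : C) : stayProb pr S 0 c ≤ 1 :=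
  Set.indicator_apply_le' (fun _ => le_rfl) fun _ => zero_le_one

lemma stayProb_add_le {n : ℕ} {B : ℝ≥0∞} (hB : ∀ c, stayProb pr S n c ≤ B) (m : ℕ)
    (c : C) :
    stayProb pr S (m + n) c ≤ stayProb pr S m c * B := by
  induction m generalizing c with
  | zero =>
    by_cases hc : c ∈ S
    · simpa [stayProb_zero, hc] using hB c
    · simp [stayProb_of_notMem hc]
  | succ m ih =>
    by_cases hc : c ∈ S
    · rw [Nat.succ_add, stayProb_succ, stayProb_succ, Set.indicator_of_mem hc,
        Set.indicator_of_mem hc, Finset.sum_mul]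
      refine sum_le_sum fun c' _ => ?_
      rw [mul_assoc]
      gcongr
      exact ih c'
    · simp [stayProb_of_notMem hc]

lemma stayProb_mul_le_pow {N : ℕ} {q : ℝ≥0∞} (hq : ∀ c, stayProb pr S N c ≤ q) (k : ℕ)
    (c : C) :
    stayProb pr S (N * k) c ≤ q ^ k := by
  induction k generalizing c with
  | zero => simpa using stayProb_zero_le_one c
  | succ k ih =>
    calc stayProb pr S (N * (k + 1)) c = stayProb pr S (N * k + N) c := by rw [Nat.mul_succ]
      _ ≤ stayProb pr S (N * k) c * q := stayProb_add_le hq _ c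
      _ ≤ q ^ k * q := by gcongr; exact ih c
      _ = q ^ (k + 1) := (pow_succ q k).symm

lemma stayProb_le_one (hsum : ∀ c, ∑ c', pr c c' = 1) (n : ℕ) (c : C) :
    stayProb pr S n c ≤ 1 := by
  induction n generalizing c with
  | zero => exact stayProb_zero_le_one c
  | succ n ih =>
    exact Set.indicator_apply_le' (fun _ => sum_mul_le_one (hsum c) ih) fun _ => zero_le_one

lemma stayProb_succ_le (hsum : ∀ c, ∑ c', pr c c' = 1) (n : ℕ) (c : C) :
    stayProb pr S (n + 1) c ≤ stayProb pr S n c := by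
  induction n generalizing c with
  | zero =>
    by_cases hc : c ∈ S
    · simpa [stayProb_zero, hc] using stayProb_le_one hsum 1 c
    · simp [stayProb_of_notMem hc]
  | succ n ih =>
    rw [stayProb_succ, stayProb_succ n]
    exact Set.indicator_le_indicator (by gcongr with c'; exact ih c')

lemma antitone_stayProb (hsum : ∀ c, ∑ c', pr c c' = 1) (c : C) :
    Antitone fun n => stayProb pr S n c :=
  antitone_nat_of_succ_le fun n => stayProb_succ_le hsum n c

lemma exists_stayProb_lt_one (hsum : ∀ c, ∑ c', pr c c' = 1) {c d : C}
    (hcd : ReflTransGen (fun a b => 0 < pr a b) c d) (hd : d ∉ S) :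
    ∃ L, stayProb pr S L c < 1 := by
  classical
  induction hcd using ReflTransGen.head_induction_on with
  | refl => exact ⟨0, by simp [stayProb_of_notMem hd]⟩
  | @head a b hab _ ih =>
    obtain ⟨L, hL⟩ := ih
    by_cases ha : a ∈ S
    · refine ⟨L + 1, ?_⟩
      rw [stayProb_succ, Set.indicator_of_mem ha]
      exact sum_mul_lt_one (hsum a) (stayProb_le_one hsum L) hab hL
    · exact ⟨0, by simp [stayProb_of_notMem ha]⟩

lemma exists_lt_one_forall_stayProb_le (hsum : ∀ c, ∑ c', pr c c' = 1)
    (hreach : ∀ c, ∃ d ∉ S, ReflTransGen (fun a b => 0 < pr a b) c d) :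
    ∃ N, ∃ q < 1, ∀ c, stayProb pr S N c ≤ q := by
  choose L hL using fun c =>
    (hreach c).elim fun _ ⟨hd, hcd⟩ => exists_stayProb_lt_one hsum hcd hd
  let N := univ.sup L
  refine ⟨N, univ.sup fun c => stayProb pr S N c, ?_,
    fun c => le_sup (f := fun c => stayProb pr S N c) (mem_univ c)⟩
  rw [Finset.sup_lt_iff zero_lt_one]
  exact fun c _ => (antitone_stayProb hsum c (le_sup (mem_univ c))).trans_lt (hL c)

lemma iInf_stayProb_eq_zero (hsum : ∀ c, ∑ c', pr c c' = 1)
    (hreach : ∀ c, ∃ d ∉ S, ReflTransGen (fun a b => 0 < pr a b) c d) (c : C) :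
    ⨅ n, stayProb pr S n c = 0 := by
  obtain ⟨N, q, hq1, hq⟩ := exists_lt_one_forall_stayProb_le hsum hreach
  refine le_antisymm ?_ zero_le
  exact ge_of_tendsto' (ENNReal.tendsto_pow_atTop_nhds_zero_of_lt_one hq1)
    fun k => (iInf_le _ (N * k)).trans (stayProb_mul_le_pow hq k c)

end StayProb

section Cylinder

variable {C : Type*}

def prefixCylinder (v : ℕ → C) (m : ℕ) : Set (ℕ → C) := {f | ∀ i ≤ m, f i = v i}

def staysIn (S : Set C) (m n : ℕ) : Set (ℕ → C) :=
  {f | ∀ i, m ≤ i → i ≤ m + n → f i ∈ S}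

lemma prefixCylinder_inter_staysIn_of_notMem {S : Set C} {v : ℕ → C} {m : ℕ} (hv : v m ∉ S)
    (n : ℕ) : prefixCylinder v m ∩ staysIn S m n = ∅ :=
  Set.eq_empty_of_forall_notMem fun _ hf =>
    hv (hf.1 m le_rfl ▸ hf.2 m le_rfl (Nat.le_add_right m n))

lemma iUnion_prefixCylinder_const_zero : ⋃ c : C, prefixCylinder (fun _ => c) 0 = Set.univ :=
  Set.eq_univ_of_forall fun f => Set.mem_iUnion.2 ⟨f 0, fun i hi => by rw [Nat.le_zero.1 hi]⟩

variable [MeasurableSpace C] {μ : Measure (ℕ → C)} {pr : C → C → ℝ≥0∞}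

lemma measure_prefixCylinder_inter_staysIn_le [Fintype C] (S : Set C)
    (hmarkov : ∀ v m c, μ (prefixCylinder (Function.update v (m + 1) c) (m + 1)) =
      μ (prefixCylinder v m) * pr (v m) c) (n : ℕ) (v : ℕ → C) (m : ℕ) :
    μ (prefixCylinder v m ∩ staysIn S m n) ≤
      μ (prefixCylinder v m) * stayProb pr S n (v m) := by
  by_cases hv : v m ∉ S
  · simp [prefixCylinder_inter_staysIn_of_notMem hv]
  rw [not_not] at hv
  induction n generalizing v m with
  | zero =>
    rw [stayProb_zero, Set.indicator_of_mem hv, Pi.one_apply, mul_one]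
    exact measure_mono Set.inter_subset_left
  | succ n ih =>
    let extend (c : C) := Function.update v (m + 1) c
    have hextend (c : C) : extend c (m + 1) = c := Function.update_self ..
    have hcover : prefixCylinder v m ∩ staysIn S m (n + 1) ⊆
        ⋃ c, prefixCylinder (extend c) (m + 1) ∩ staysIn S (m + 1) n := by
      intro f ⟨hfv, hfS⟩
      refine Set.mem_iUnion.2
        ⟨f (m + 1), fun i hi => ?_, fun i hi hi' => hfS i (by omega) (by omega)⟩
      rcases hi.lt_or_eq with hi | rfl
      · simp only [extend, Function.update_of_ne hi.ne]
        exact hfv i (by omega)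
      · exact (hextend _).symm
    calc _ ≤ _ := measure_mono hcover
      _ ≤ ∑ c, μ (prefixCylinder (extend c) (m + 1) ∩ staysIn S (m + 1) n) :=
        measure_iUnion_fintype_le _ _
      _ ≤ ∑ c, μ (prefixCylinder (extend c) (m + 1)) * stayProb pr S n c := by
        gcongr with c
        by_cases hc : c ∈ S
        · simpa only [hextend] using ih (extend c) (m + 1) (by rwa [hextend])
        · simp [prefixCylinder_inter_staysIn_of_notMem (by rwa [hextend] : extend c (m + 1) ∉ S)]
      _ = μ (prefixCylinder v m) * stayProb pr S (n + 1) (v m) := by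
        simp only [extend, hmarkov, stayProb_succ, Set.indicator_of_mem hv, mul_sum, mul_assoc]

variable [DecidableEq C]

def IsMarkovChainLaw (μ : Measure (ℕ → C)) (c₀ : C) (pr : C → C → ℝ≥0∞) : Prop :=
  ∀ n w, μ (prefixCylinder w n) =
    (if w 0 = c₀ then 1 else 0) * ∏ i ∈ range n, pr (w i) (w (i + 1))

namespace IsMarkovChainLaw

variable {c₀ : C} (hμ : IsMarkovChainLaw μ c₀ pr)
include hμ

lemma measure_prefixCylinder_update_succ (v : ℕ → C) (m : ℕ) (c : C) :
    μ (prefixCylinder (Function.update v (m + 1) c) (m + 1)) =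
      μ (prefixCylinder v m) * pr (v m) c := by
  have hv : ∀ i ≤ m, Function.update v (m + 1) c i = v i :=
    fun i hi => Function.update_of_ne (by omega) _ _
  rw [hμ, hμ, prod_range_succ, Function.update_self, hv 0 (Nat.zero_le m), hv m le_rfl, mul_assoc]
  congr 2
  exact prod_congr rfl fun i hi => by
    rw [hv i (mem_range.1 hi).le, hv (i + 1) (mem_range.1 hi)]

lemma measure_prefixCylinder_const_zero (c : C) :
    μ (prefixCylinder (fun _ => c) 0) = if c = c₀ then 1 else 0 := by
  rw [hμ]; simp

variable [Fintype C]

lemma measure_univ_eq_one : μ Set.univ = 1 := by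
  refine le_antisymm ?_ ?_
  · calc μ Set.univ ≤ ∑ c, μ (prefixCylinder (fun _ => c) 0) := by
          rw [← iUnion_prefixCylinder_const_zero]; exact measure_iUnion_fintype_le _ _
      _ = 1 := by simp [hμ.measure_prefixCylinder_const_zero]
  · calc 1 = μ (prefixCylinder (fun _ => c₀) 0) := by
          simp [hμ.measure_prefixCylinder_const_zero]
      _ ≤ μ Set.univ := measure_mono (Set.subset_univ _)

lemma measure_staysIn_le_stayProb (S : Set C) (n : ℕ) :
    μ (staysIn S 0 n) ≤ stayProb pr S n c₀ := by
  calc μ (staysIn S 0 n) = μ (⋃ c, prefixCylinder (fun _ => c) 0 ∩ staysIn S 0 n) := by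
        rw [← Set.iUnion_inter, iUnion_prefixCylinder_const_zero, Set.univ_inter]
    _ ≤ ∑ c, μ (prefixCylinder (fun _ => c) 0 ∩ staysIn S 0 n) :=
        measure_iUnion_fintype_le _ _
    _ ≤ ∑ c, μ (prefixCylinder (fun _ => c) 0) * stayProb pr S n c := by
        gcongr with c
        exact measure_prefixCylinder_inter_staysIn_le S hμ.measure_prefixCylinder_update_succ n _ 0
    _ = stayProb pr S n c₀ := by simp [hμ.measure_prefixCylinder_const_zero]

end IsMarkovChainLaw

end Cylinder

theorem stmt14_general {C : Type*} [Fintype C] [DecidableEq C] [MeasurableSpace C]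
    (Δ : Set (C × C)) (c₀ : C)
    (pr : C → C → ℝ≥0∞)
    (hpos : ∀ c c', 0 < pr c c' ↔ (c, c') ∈ Δ)
    (hsum : ∀ c, ∑ c' : C, pr c c' = 1)
    (μ : Measure (ℕ → C))
    (hμ : ∀ (n : ℕ) (w : ℕ → C),
      μ {f | ∀ i ≤ n, f i = w i} =
        (if w 0 = c₀ then 1 else 0) * ∏ i ∈ Finset.range n, pr (w i) (w (i + 1))) :
    μ {f : ℕ → C | ∃ i, ∀ d : C,
        Relation.ReflTransGen (fun x y => (x, y) ∈ Δ) (f i) d →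
          Relation.ReflTransGen (fun x y => (x, y) ∈ Δ) d (f i)} = 1 := by
  have hlaw : IsMarkovChainLaw μ c₀ pr := hμ
  let R : C → C → Prop := fun x y => (x, y) ∈ Δ
  let S : Set C := {c | ¬InBottomSCC R c}
  have hreach (c : C) : ∃ d ∉ S, ReflTransGen (fun a b => 0 < pr a b) c d := by
    obtain ⟨d, hcd, hd⟩ := exists_reflTransGen_inBottomSCC R c
    exact ⟨d, not_not.2 hd, ReflTransGen.mono (fun a b hab => (hpos a b).2 hab) c d hcd⟩
  have hnull : μ {f : ℕ → C | ∃ i, InBottomSCC R (f i)}ᶜ = 0 := by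
    refine le_antisymm ?_ zero_le
    rw [← iInf_stayProb_eq_zero hsum hreach c₀]
    refine le_iInf fun n => le_trans (measure_mono ?_) (hlaw.measure_staysIn_le_stayProb S n)
    exact fun f hf i _ _ hfi => hf ⟨i, hfi⟩
  exact (measure_congr (ae_eq_univ.2 hnull)).trans hlaw.measure_univ_eq_one

/-- In a finite Markov chain where every state has a successor and all transition
probabilities are positive, runs from c₀ almost surely eventually reach a bottom
strongly connected component (a state from which reachability is symmetric). -/
theorem stmt14 {C : Type*} [Fintype C] [DecidableEq C] [MeasurableSpace C]
    (Δ : Set (C × C)) (hsucc : ∀ c : C, ∃ c', (c, c') ∈ Δ) (c₀ : C)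
    (pr : C → C → ℝ≥0∞)
    (hpos : ∀ c c', 0 < pr c c' ↔ (c, c') ∈ Δ)
    (hsum : ∀ c, ∑ c' : C, pr c c' = 1)
    (μ : Measure (ℕ → C))
    (hμ : ∀ (n : ℕ) (w : ℕ → C),
      μ {f | ∀ i ≤ n, f i = w i} =
        (if w 0 = c₀ then 1 else 0) * ∏ i ∈ Finset.range n, pr (w i) (w (i + 1))) :
    μ {f : ℕ → C | ∃ i, ∀ d : C,
        Relation.ReflTransGen (fun x y => (x, y) ∈ Δ) (f i) d →
          Relation.ReflTransGen (fun x y => (x, y) ∈ Δ) d (f i)} = 1 :=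
  stmt14_general Δ c₀ pr hpos hsum μ hμ
end

section
/- Let P ⊆ C × C be a reflexive transitive relation, Δ ⊆ P, Id the identity, Δ' = (P \ Id) ∪ Δ, I ⊆ C, and L ⊆ C. There exists an infinite Δ'-run starting in I that visits L infinitely often if and only if either (a) there exist c₀ ∈ I and c ∈ L with (c₀,c) ∈ P and (c,c) ∈ Δ ∪ (P \ Id)², or (b) there exists a sequence (cᵢ)_{i≥0} of pairwise distinct configurations with c₀ ∈ I, cᵢ ∈ L for all i ≥ 1, and (cᵢ, cᵢ₊₁) ∈ P for all i ≥ 0. -/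
/-!
A Δ'-run is a P-chain, hence by transitivity any two of its positions i ≤ j are P-related.
If some configuration of L occurs at two positions i < j, the step leaving position i is
either a Δ-self-loop or a step in P \ Id to some d, and d returns to f j = f i through P:
this is (a). Otherwise the visits to L are pairwise distinct, and the initial configuration
followed by the successive visits to L is an injective P-chain: this is (b).
Conversely, (a) gives the lasso c₀ c c c … or c₀ c d c d …, and an injective P-chain is a
Δ'-run because none of its steps is an identity.
-/

open Function Set

section

variable {C : Type*}

def deltaPrime (P Δ : Set (C × C)) (a b : C) : Prop := ((a, b) ∈ P ∧ a ≠ b) ∨ (a, b) ∈ Δ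

/-- `(c, c) ∈ Δ ∪ (P \ Id)²`. -/
def HasLoop (P Δ : Set (C × C)) (c : C) : Prop :=
  (c, c) ∈ Δ ∨ ∃ d, ((c, d) ∈ P ∧ c ≠ d) ∧ ((d, c) ∈ P ∧ d ≠ c)

def IsRecurrentRun (R : C → C → Prop) (L : Set C) (f : ℕ → C) : Prop :=
  (∀ i, R (f i) (f (i + 1))) ∧ {i | f i ∈ L}.Infinite

section Runs

variable {R : C → C → Prop} {L : Set C}

theorem IsRecurrentRun.cons {f : ℕ → C} {c : C} (hf : IsRecurrentRun R L f) (hc : R c (f 0)) :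
    IsRecurrentRun R L (fun | 0 => c | n + 1 => f n) := by
  refine ⟨fun | 0 => hc | n + 1 => hf.1 n, ?_⟩
  refine (hf.2.image Nat.succ_injective.injOn).mono ?_
  rintro _ ⟨n, hn, rfl⟩
  exact hn

theorem isRecurrentRun_const {c : C} (hR : R c c) (hc : c ∈ L) :
    IsRecurrentRun R L (fun _ => c) :=
  ⟨fun _ => hR, by simpa [hc] using Set.infinite_univ⟩

theorem isRecurrentRun_alternate {c d : C} (hcd : R c d) (hdc : R d c) (hc : c ∈ L) :
    IsRecurrentRun R L (fun n => if Even n then c else d) := by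
  refine ⟨fun n => ?_, ?_⟩
  · rcases Nat.even_or_odd n with hn | hn
    · simpa [hn, Nat.even_add_one] using hcd
    · simpa [Nat.not_even_iff_odd.mpr hn, Nat.even_add_one] using hdc
  · refine (Set.infinite_range_of_injective (mul_right_injective₀ two_ne_zero)).mono ?_
    rintro _ ⟨k, rfl⟩
    simp [hc]

end Runs

section Chains

theorem exists_injective_chain_of_injOn {R : C → C → Prop} {f : ℕ → C}
    (hf : ∀ ⦃i j⦄, i ≤ j → R (f i) (f j)) {s : Set ℕ} (hs : s.Infinite) (h0 : 0 ∈ s)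
    (hinj : s.InjOn f) :
    ∃ g : ℕ → C, Injective g ∧ g 0 = f 0 ∧ (∀ k, 1 ≤ k → g k ∈ f '' (s \ {0})) ∧
      ∀ k, R (g k) (g (k + 1)) := by
  set e := Nat.nth (· ∈ s)
  have hmem : ∀ k, e k ∈ s := Nat.nth_mem_of_infinite hs
  have hmono : StrictMono e := Nat.nth_strictMono hs
  have he0 : e 0 = 0 := Nat.nth_zero_of_zero h0
  refine ⟨f ∘ e, fun a b hab => hmono.injective (hinj (hmem a) (hmem b) hab), by simp [he0],
    fun k hk => ⟨e k, ⟨hmem k, ?_⟩, rfl⟩, fun k => hf (hmono.monotone k.le_succ)⟩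
  exact (he0 ▸ hmono hk : 0 < e k).ne'

theorem mem_of_le_of_forall_mem_succ {P : Set (C × C)} (hrefl : ∀ c : C, (c, c) ∈ P)
    (htrans : ∀ a b c : C, (a, b) ∈ P → (b, c) ∈ P → (a, c) ∈ P) {f : ℕ → C}
    (hf : ∀ i, (f i, f (i + 1)) ∈ P) {i j : ℕ} (hij : i ≤ j) : (f i, f j) ∈ P := by
  have : Std.Refl fun a b => (a, b) ∈ P := ⟨hrefl⟩
  have : IsTrans C fun a b => (a, b) ∈ P := ⟨htrans⟩
  exact Nat.rel_of_forall_rel_succ_of_le (fun a b => (a, b) ∈ P) hf hij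

theorem injOn_insert_zero_setOf_mem {f : ℕ → C} {L : Set C} (h : {i | f i ∈ L}.InjOn f) :
    (insert 0 {i | f i ∈ L}).InjOn f := by
  by_cases h0 : f 0 ∈ L
  · rwa [insert_eq_of_mem (show 0 ∈ {i | f i ∈ L} from h0)]
  · exact (injOn_insert (show 0 ∉ {i | f i ∈ L} from h0)).2
      ⟨h, fun ⟨i, hi, hfi⟩ => h0 (hfi ▸ hi)⟩

end Chains

section DeltaPrime

variable {P Δ : Set (C × C)} {L : Set C}

theorem mem_of_deltaPrime (hsub : Δ ⊆ P) {a b : C} (h : deltaPrime P Δ a b) : (a, b) ∈ P :=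
  h.elim And.left (@hsub _)

theorem isRecurrentRun_deltaPrime_of_injective {g : ℕ → C} (hg : Injective g)
    (hP : ∀ i, (g i, g (i + 1)) ∈ P) (hL : ∀ i, 1 ≤ i → g i ∈ L) :
    IsRecurrentRun (deltaPrime P Δ) L g :=
  ⟨fun i => Or.inl ⟨hP i, hg.ne i.succ_ne_self.symm⟩, (Set.Ici_infinite 1).mono hL⟩

theorem exists_run_of_hasLoop {c : C} (h : HasLoop P Δ c) (hc : c ∈ L) :
    ∃ f : ℕ → C, f 0 = c ∧ IsRecurrentRun (deltaPrime P Δ) L f := by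
  rcases h with hΔ | ⟨d, hcd, hdc⟩
  · exact ⟨_, rfl, isRecurrentRun_const (Or.inr hΔ) hc⟩
  · exact ⟨_, by simp, isRecurrentRun_alternate (Or.inl hcd) (Or.inl hdc) hc⟩

theorem exists_run_of_mem_of_run {c₀ : C} {f : ℕ → C} (h : (c₀, f 0) ∈ P)
    (hf : IsRecurrentRun (deltaPrime P Δ) L f) :
    ∃ g : ℕ → C, g 0 = c₀ ∧ IsRecurrentRun (deltaPrime P Δ) L g := by
  by_cases hc : c₀ = f 0
  · exact ⟨f, hc.symm, hf⟩
  · exact ⟨_, rfl, hf.cons (Or.inl ⟨h, hc⟩)⟩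

theorem hasLoop_of_eq {f : ℕ → C} (hf : ∀ i, deltaPrime P Δ (f i) (f (i + 1)))
    (hP : ∀ ⦃i j⦄, i ≤ j → (f i, f j) ∈ P) {i j : ℕ} (hij : i < j) (heq : f i = f j) :
    HasLoop P Δ (f i) := by
  by_cases hstay : f i = f (i + 1)
  · left
    rcases hf i with ⟨-, hne⟩ | hΔ
    · exact absurd hstay hne
    · rwa [← hstay] at hΔ
  · right
    exact ⟨f (i + 1), ⟨hP i.le_succ, hstay⟩, ⟨heq ▸ hP hij, Ne.symm hstay⟩⟩

theorem exists_hasLoop_of_not_injOn {f : ℕ → C} (hf : ∀ i, deltaPrime P Δ (f i) (f (i + 1)))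
    (hP : ∀ ⦃i j⦄, i ≤ j → (f i, f j) ∈ P) (h : ¬{i | f i ∈ L}.InjOn f) :
    ∃ i, f i ∈ L ∧ HasLoop P Δ (f i) := by
  simp only [InjOn, not_forall] at h
  obtain ⟨a, ha, b, hb, hab, hne⟩ := h
  rcases Nat.lt_or_gt_of_ne hne with hlt | hlt
  · exact ⟨a, ha, hasLoop_of_eq hf hP hlt hab⟩
  · exact ⟨b, hb, hasLoop_of_eq hf hP hlt hab.symm⟩

end DeltaPrime

end

/-- Characterisation of infinite Δ'-runs visiting L infinitely often, where
Δ' = (P \ Id) ∪ Δ, P reflexive transitive, Δ ⊆ P: such a run exists iff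
(a) there exist c₀ ∈ I and c ∈ L with (c₀,c) ∈ P and (c,c) ∈ Δ ∪ (P \ Id)², or
(b) there is an infinite sequence of pairwise distinct configurations starting in I,
lying in L from index 1 on, with consecutive pairs in P. -/
theorem stmt16 {C : Type*} (P Δ : Set (C × C))
    (hrefl : ∀ c : C, (c, c) ∈ P)
    (htrans : ∀ a b c : C, (a, b) ∈ P → (b, c) ∈ P → (a, c) ∈ P)
    (hsub : Δ ⊆ P) (I L : Set C) :
    (∃ f : ℕ → C, f 0 ∈ I ∧
        (∀ i, ((f i, f (i + 1)) ∈ P ∧ f i ≠ f (i + 1)) ∨ (f i, f (i + 1)) ∈ Δ) ∧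
        {i : ℕ | f i ∈ L}.Infinite) ↔
      ((∃ c₀ ∈ I, ∃ c ∈ L, (c₀, c) ∈ P ∧
          ((c, c) ∈ Δ ∨ ∃ d, ((c, d) ∈ P ∧ c ≠ d) ∧ ((d, c) ∈ P ∧ d ≠ c))) ∨
        (∃ g : ℕ → C, Function.Injective g ∧ g 0 ∈ I ∧ (∀ i, 1 ≤ i → g i ∈ L) ∧
          ∀ i, (g i, g (i + 1)) ∈ P)) := by
  change (∃ f, f 0 ∈ I ∧ IsRecurrentRun (deltaPrime P Δ) L f) ↔
    (∃ c₀ ∈ I, ∃ c ∈ L, (c₀, c) ∈ P ∧ HasLoop P Δ c) ∨ _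
  constructor
  · rintro ⟨f, hf0, hrun⟩
    have hP : ∀ ⦃i j⦄, i ≤ j → (f i, f j) ∈ P :=
      fun _ _ => mem_of_le_of_forall_mem_succ hrefl htrans
        fun i => mem_of_deltaPrime hsub (hrun.1 i)
    by_cases hinj : {i | f i ∈ L}.InjOn f
    · obtain ⟨g, hg, hg0, hgL, hgP⟩ :=
        exists_injective_chain_of_injOn (R := fun a b => (a, b) ∈ P) hP
          (hrun.2.mono (subset_insert 0 _)) (mem_insert 0 _) (injOn_insert_zero_setOf_mem hinj)
      refine Or.inr ⟨g, hg, hg0 ▸ hf0, fun k hk => ?_, hgP⟩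
      obtain ⟨n, ⟨hn, hn0⟩, hfn⟩ := hgL k hk
      exact hfn ▸ hn.resolve_left hn0
    · obtain ⟨i, hiL, hloop⟩ := exists_hasLoop_of_not_injOn hrun.1 hP hinj
      exact Or.inl ⟨f 0, hf0, f i, hiL, hP i.zero_le, hloop⟩
  · rintro (⟨c₀, hc₀, c, hcL, hc₀c, hloop⟩ | ⟨g, hg, hg0, hgL, hgP⟩)
    · obtain ⟨f, rfl, hf⟩ := exists_run_of_hasLoop hloop hcL
      obtain ⟨g, rfl, hg⟩ := exists_run_of_mem_of_run hc₀c hf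
      exact ⟨g, hc₀, hg⟩
    · exact ⟨g, hg0, isRecurrentRun_deltaPrime_of_injective hg hgP hgL⟩
end

section
/- Let P be a reflexive, transitive, length-preserving relation on Σ* (for finite Σ), Δ ⊆ P, L ⊆ Σ*, I ⊆ Σ*. Then there is no infinite sequence (cᵢ)_{i≥0} of pairwise distinct configurations with cᵢ ∈ L for i ≥ 1 and (cᵢ, cᵢ₊₁) ∈ P for all i. Consequently, condition (b) of the infinite-visitation characterization never holds for length-preserving relations, and an infinite Δ'-run from I visiting L infinitely often exists iff there exist c₀ ∈ I, c ∈ L with (c₀,c) ∈ P and (c,c) ∈ Δ ∪ (P \ Id)². -/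
/-- For a reflexive, transitive, length-preserving P over a finite alphabet with Δ ⊆ P:
no infinite directed clique (condition (b)) exists, and an infinite Δ'-run from I
visiting L infinitely often (Δ' = (P \ Id) ∪ Δ) exists iff there are c₀ ∈ I, c ∈ L with
(c₀,c) ∈ P and (c,c) ∈ Δ ∪ (P \ Id)². -/
theorem stmt17 {A : Type*} [Fintype A] (P Δ : Set (List A × List A))
    (hrefl : ∀ c : List A, (c, c) ∈ P)
    (htrans : ∀ a b c : List A, (a, b) ∈ P → (b, c) ∈ P → (a, c) ∈ P)
    (hsub : Δ ⊆ P)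
    (hlp : ∀ p ∈ P, (Prod.fst p).length = (Prod.snd p).length)
    (I L : Set (List A)) :
    (¬ ∃ g : ℕ → List A, Function.Injective g ∧ g 0 ∈ I ∧ (∀ i, 1 ≤ i → g i ∈ L) ∧
        ∀ i, (g i, g (i + 1)) ∈ P) ∧
    ((∃ f : ℕ → List A, f 0 ∈ I ∧
        (∀ i, ((f i, f (i + 1)) ∈ P ∧ f i ≠ f (i + 1)) ∨ (f i, f (i + 1)) ∈ Δ) ∧
        {i : ℕ | f i ∈ L}.Infinite) ↔
      ∃ c₀ ∈ I, ∃ c ∈ L, (c₀, c) ∈ P ∧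
        ((c, c) ∈ Δ ∨ ∃ d, ((c, d) ∈ P ∧ c ≠ d) ∧ ((d, c) ∈ P ∧ d ≠ c))) := by
  constructor
  · rintro ⟨g, hinj, -, -, hP⟩
    have hlen : ∀ i, (g i).length = (g 0).length := by
      intro i; induction i with
      | zero => rfl
      | succ n ih => rw [← ih]; exact (hlp _ (hP n)).symm
    have hfin : Set.Finite (Set.range g) :=
      (List.finite_length_eq A (g 0).length).subset (by rintro _ ⟨i, rfl⟩; exact hlen i)
    exact Set.infinite_range_of_injective hinj hfin
  constructor
  · rintro ⟨f, hI, hstep, hinf⟩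
    have hstepP : ∀ i, (f i, f (i + 1)) ∈ P := by
      intro i; rcases hstep i with ⟨h, -⟩ | h
      · exact h
      · exact hsub h
    have hchain : ∀ i j, i ≤ j → (f i, f j) ∈ P := by
      intro i j hij
      induction j, hij using Nat.le_induction with
      | base => exact hrefl _
      | succ n hn ih => exact htrans _ _ _ ih (hstepP n)
    have hlen : ∀ i, (f i).length = (f 0).length := by
      intro i; induction i with
      | zero => rfl
      | succ n ih => rw [← ih]; exact (hlp _ (hstepP n)).symm
    obtain ⟨i, hi, j, hj, hij, heq⟩ :=
      hinf.exists_ne_map_eq_of_mapsTo (f := f)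
        (t := {l : List A | l.length = (f 0).length})
        (fun i _ => hlen i) (List.finite_length_eq A (f 0).length)
    wlog hlt : i < j generalizing i j
    · exact this j hj i hi hij.symm heq.symm (by omega)
    refine ⟨f 0, hI, f i, hi, hchain 0 i (Nat.zero_le i), ?_⟩
    by_cases hc : f (i + 1) = f i
    · left
      rcases hstep i with ⟨-, hne⟩ | h
      · exact absurd hc.symm hne
      · rwa [hc] at h
    · right
      refine ⟨f (i + 1), ⟨hstepP i, fun h => hc h.symm⟩, ?_, hc⟩
      have := hchain (i + 1) j hlt
      rwa [← heq] at this
  · rintro ⟨c₀, hc₀, c, hcL, hP0, hΔ | ⟨d, ⟨hcd, hcdne⟩, ⟨hdc, hdcne⟩⟩⟩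
    · refine ⟨fun i => if i = 0 then c₀ else c, by simp [hc₀], ?_, ?_⟩
      · intro i
        rcases Nat.eq_zero_or_pos i with rfl | hpos
        · simp only [if_pos rfl, if_neg (by omega : ¬ (0 + 1 = 0))]
          by_cases h : c₀ = c
          · right; rw [h]; exact hΔ
          · left; exact ⟨hP0, h⟩
        · right
          simp only [if_neg (by omega : ¬ i = 0), if_neg (by omega : ¬ (i + 1 = 0))]
          exact hΔ
      · apply Set.infinite_of_injective_forall_mem (f := fun k : ℕ => k + 1)
        · intro a b h; simp only [] at h; omega
        · intro k; simp [hcL]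
    · by_cases h0 : c₀ = c
      · refine ⟨fun i => if i % 2 = 0 then c else d, by simp [h0 ▸ hc₀], ?_, ?_⟩
        · intro i
          left
          rcases Nat.even_or_odd i with ⟨k, hk⟩ | ⟨k, hk⟩
          · simp only [if_pos (by omega : i % 2 = 0), if_neg (by omega : ¬ (i + 1) % 2 = 0)]
            exact ⟨hcd, hcdne⟩
          · simp only [if_neg (by omega : ¬ i % 2 = 0), if_pos (by omega : (i + 1) % 2 = 0)]
            exact ⟨hdc, hdcne⟩
        · apply Set.infinite_of_injective_forall_mem (f := fun k : ℕ => 2 * k)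
          · intro a b h; simp only [] at h; omega
          · intro k
            simp only [Set.mem_setOf_eq, if_pos (by omega : 2 * k % 2 = 0)]
            exact hcL
      · refine ⟨fun i => if i = 0 then c₀ else if i % 2 = 1 then c else d, by simp [hc₀], ?_, ?_⟩
        · intro i
          left
          rcases Nat.eq_zero_or_pos i with rfl | hpos
          · simp only [if_pos rfl, if_neg (by omega : ¬ (0 + 1 = 0)),
              if_pos (by norm_num : (0 + 1) % 2 = 1)]
            exact ⟨hP0, h0⟩
          · simp only [if_neg (by omega : ¬ i = 0), if_neg (by omega : ¬ (i + 1 = 0))]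
            rcases Nat.even_or_odd i with ⟨k, hk⟩ | ⟨k, hk⟩
            · simp only [if_neg (by omega : ¬ i % 2 = 1), if_pos (by omega : (i + 1) % 2 = 1)]
              exact ⟨hdc, hdcne⟩
            · simp only [if_pos (by omega : i % 2 = 1), if_neg (by omega : ¬ (i + 1) % 2 = 1)]
              exact ⟨hcd, hcdne⟩
        · apply Set.infinite_of_injective_forall_mem (f := fun k : ℕ => 2 * k + 1)
          · intro a b h; simp only [] at h; omega
          · intro k
            simp only [Set.mem_setOf_eq, if_neg (by omega : ¬ (2 * k + 1 = 0)),
              if_pos (by omega : (2 * k + 1) % 2 = 1)]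
            exact hcL
end
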